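/- Let λ ≥ 1 be an integer, M = 2^λ, and n ≥ 1. Let Δx_A, Δx_B : Fin n → ℂ be vectors all of whose entries lie in the difference constellation ΔS of the M-PSK signal set and such that for every i, Δx_A i = Δx_B i or Δx_A i = −Δx_B i. Define the bit-wise XOR map f : (Fin n → ZMod M) → (Fin n → ZMod M) → (Fin n → ZMod M) by f a b = fun i => (((a i).val ^^^ (b i).val : ℕ) : ZMod M) (bitwise XOR of the representatives, which is again < M). Then f removes the singular fade subspace [span(Δx_A, Δx_B)]^⊥. -/

import Mathlib

/-- The point of the `M`-PSK signal set indexed by `k : ZMod M`. -/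
noncomputable def psk (M : ℕ) (k : ZMod M) : ℂ :=
  Complex.exp (Complex.I * (2 * (k.val : ℂ) + 1) * (Real.pi : ℂ) / (M : ℂ))

/-- `f` removes the singular fade subspace `[span(ΔxA, ΔxB)]^⊥`: whenever the
differences of the transmitted PSK points are a common complex multiple of
`(ΔxA, ΔxB)`, the two pairs are mapped to the same value. -/
def Removes {M : ℕ} {ιA ιB T : Type*} (ΔxA : ιA → ℂ) (ΔxB : ιB → ℂ)
    (f : (ιA → ZMod M) → (ιB → ZMod M) → T) : Prop :=
  ∀ a a' : ιA → ZMod M, ∀ b b' : ιB → ZMod M,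
    (∃ c : ℂ, (∀ i, psk M (a i) - psk M (a' i) = c * ΔxA i) ∧
              (∀ j, psk M (b j) - psk M (b' j) = c * ΔxB j)) →
    f a b = f a' b'

/-- `f` satisfies the exclusive law. -/
def ExclusiveLaw {M : ℕ} {ιA ιB T : Type*}
    (f : (ιA → ZMod M) → (ιB → ZMod M) → T) : Prop :=
  (∀ a a' b, a ≠ a' → f a b ≠ f a' b) ∧ (∀ a b b', b ≠ b' → f a b ≠ f a b')

/-- The `M`-PSK signal set `{exp(I·(2k+1)·π/M) : 0 ≤ k < M}`. -/
def pskSet (M : ℕ) : Set ℂ :=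
  {z | ∃ k : ℕ, k < M ∧ z = Complex.exp (Complex.I * (2 * (k : ℂ) + 1) * (Real.pi : ℂ) / (M : ℂ))}

/-- The difference constellation `ΔS = {s - s' : s, s' ∈ S}`. -/
def diffSet (M : ℕ) : Set ℂ := {z | ∃ s ∈ pskSet M, ∃ s' ∈ pskSet M, z = s - s'}

/-! With `ω = exp(πi/M)` and `ζ = exp(2πi/M)`, the PSK points `psk k = ω ζ^k` lie on the unit
circle. If `psk a - psk a' = -(psk b - psk b')`, then `psk a + psk b = psk a' + psk b'`. Two pairs of unit
complex numbers with the same nonzero sum also have the same product (conjugate the sum), so they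
agree up to order; a zero sum forces `b = a + M/2`, and since `M/2` is the top bit of a `λ`-bit
index, `b.val = a.val ^^^ M/2`. Either way `a ^^^ b = a' ^^^ b'`. The case
`psk a - psk a' = psk b - psk b'` reduces to this one by replacing `b, b'` with their antipodes
`b + M/2, b' + M/2`, which flips the same bit of both XORs. -/

theorem Nat.add_two_pow_mod_two_pow_succ {l v : ℕ} (hv : v < 2 ^ (l + 1)) :
    (v + 2 ^ l) % 2 ^ (l + 1) = v ^^^ 2 ^ l := by
  apply Nat.eq_of_testBit_eq
  intro j
  rw [Nat.testBit_mod_two_pow, Nat.testBit_xor, Nat.testBit_two_pow, Nat.add_comm v]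
  rcases lt_trichotomy j l with h | rfl | h
  · simp [Nat.testBit_two_pow_add_gt h, h.ne', show j < l + 1 by omega]
  · simp [Nat.testBit_two_pow_add_eq]
  · simp [show ¬ j < l + 1 by omega, h.ne, Nat.testBit_lt_two_pow
      (hv.trans_le (Nat.pow_le_pow_right two_pos h))]

theorem eq_and_eq_or_eq_and_eq_of_add_eq_of_mul_eq {R : Type*} [CommRing R] [NoZeroDivisors R]
    {x y u v : R} (hs : x + y = u + v) (hp : x * y = u * v) :
    (x = u ∧ y = v) ∨ (x = v ∧ y = u) := by
  have : (u - x) * (u - y) = 0 := by linear_combination (-u) * hs + hp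
  rcases mul_eq_zero.mp this with h | h
  · exact Or.inl ⟨by linear_combination -h, by linear_combination hs + h⟩
  · exact Or.inr ⟨by linear_combination hs + h, by linear_combination -h⟩

theorem Complex.add_eq_zero_or_mul_eq_mul_of_add_eq {x y u v : ℂ} (hx : ‖x‖ = 1)
    (hy : ‖y‖ = 1) (hu : ‖u‖ = 1) (hv : ‖v‖ = 1) (h : x + y = u + v) :
    x + y = 0 ∨ x * y = u * v := by
  have hinv : x⁻¹ + y⁻¹ = u⁻¹ + v⁻¹ := by
    simp only [Complex.inv_eq_conj hx, Complex.inv_eq_conj hy, Complex.inv_eq_conj hu,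
      Complex.inv_eq_conj hv, ← map_add, h]
  have h0 : ∀ z : ℂ, ‖z‖ = 1 → z ≠ 0 := fun z hz => norm_ne_zero_iff.mp (by simp [hz])
  rw [inv_add_inv (h0 x hx) (h0 y hy), inv_add_inv (h0 u hu) (h0 v hv), h,
    div_eq_div_iff (mul_ne_zero (h0 x hx) (h0 y hy)) (mul_ne_zero (h0 u hu) (h0 v hv))] at hinv
  by_cases hs : x + y = 0
  · exact Or.inl hs
  · exact Or.inr (mul_left_cancel₀ (h ▸ hs) hinv).symm

theorem psk_eq_mul_pow (M : ℕ) (k : ZMod M) :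
    psk M k = Complex.exp (Real.pi * Complex.I / M) *
      Complex.exp (2 * Real.pi * Complex.I / M) ^ k.val := by
  rw [psk, ← Complex.exp_nat_mul, ← Complex.exp_add]
  ring_nf

theorem norm_psk (M : ℕ) (k : ZMod M) : ‖psk M k‖ = 1 := by
  rw [psk, Complex.norm_exp]
  simp

theorem psk_injective {M : ℕ} (hM : M ≠ 0) : Function.Injective (psk M) := by
  have : NeZero M := ⟨hM⟩
  intro a b h
  rw [psk_eq_mul_pow, psk_eq_mul_pow, mul_right_inj' (Complex.exp_ne_zero _)] at h
  exact ZMod.val_injective M ((Complex.isPrimitiveRoot_exp M hM).pow_inj a.val_lt b.val_lt h)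

theorem psk_add_two_pow (l : ℕ) (k : ZMod (2 ^ (l + 1))) :
    psk (2 ^ (l + 1)) (k + (2 ^ l : ℕ)) = -psk (2 ^ (l + 1)) k := by
  rw [psk_eq_mul_pow, psk_eq_mul_pow, ZMod.val_add,
    ZMod.val_cast_of_lt (Nat.pow_lt_pow_succ one_lt_two)]
  set ζ := Complex.exp (2 * Real.pi * Complex.I / (2 ^ (l + 1) : ℕ))
  have hζ : IsPrimitiveRoot ζ (2 ^ (l + 1)) := Complex.isPrimitiveRoot_exp _ (by positivity)
  have hζ_mod : ζ ^ ((k.val + 2 ^ l) % 2 ^ (l + 1)) = ζ ^ (k.val + 2 ^ l) := by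
    have := pow_mod_orderOf ζ (k.val + 2 ^ l)
    rwa [← hζ.eq_orderOf] at this
  have hζ_half : ζ ^ 2 ^ l = -1 := by
    have := hζ.pow_of_dvd (by positivity) (pow_dvd_pow 2 l.le_succ)
    rw [show 2 ^ (l + 1) / 2 ^ l = 2 by simp [pow_succ]] at this
    exact this.eq_neg_one_of_two_right
  rw [hζ_mod, pow_add ζ, hζ_half]
  ring

theorem val_add_two_pow (l : ℕ) (k : ZMod (2 ^ (l + 1))) :
    (k + (2 ^ l : ℕ)).val = k.val ^^^ 2 ^ l := by
  rw [ZMod.val_add, ZMod.val_cast_of_lt (Nat.pow_lt_pow_succ one_lt_two),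
    Nat.add_two_pow_mod_two_pow_succ k.val_lt]

section

variable {l : ℕ} {a a' b b' : ZMod (2 ^ (l + 1))}

theorem xor_val_eq_of_psk_add_eq
    (h : psk (2 ^ (l + 1)) a + psk (2 ^ (l + 1)) b =
      psk (2 ^ (l + 1)) a' + psk (2 ^ (l + 1)) b') :
    a.val ^^^ b.val = a'.val ^^^ b'.val := by
  have hinj := psk_injective (M := 2 ^ (l + 1)) (by positivity)
  have antipodal : ∀ x y : ZMod (2 ^ (l + 1)),
      psk (2 ^ (l + 1)) x + psk (2 ^ (l + 1)) y = 0 → x.val ^^^ y.val = 2 ^ l := by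
    intro x y hxy
    obtain rfl : y = x + (2 ^ l : ℕ) := hinj (by rw [psk_add_two_pow]; linear_combination hxy)
    rw [val_add_two_pow, xor_cancel_left]
  rcases Complex.add_eq_zero_or_mul_eq_mul_of_add_eq (norm_psk _ a) (norm_psk _ b)
    (norm_psk _ a') (norm_psk _ b') h with hs | hp
  · rw [antipodal a b hs, antipodal a' b' (h ▸ hs)]
  · rcases eq_and_eq_or_eq_and_eq_of_add_eq_of_mul_eq h hp with ⟨ha, hb⟩ | ⟨ha, hb⟩
    · rw [hinj ha, hinj hb]
    · rw [hinj ha, hinj hb, Nat.xor_comm]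

theorem xor_val_eq_of_psk_sub_eq_neg
    (h : psk (2 ^ (l + 1)) a - psk (2 ^ (l + 1)) a' =
      -(psk (2 ^ (l + 1)) b - psk (2 ^ (l + 1)) b')) :
    a.val ^^^ b.val = a'.val ^^^ b'.val :=
  xor_val_eq_of_psk_add_eq (by linear_combination h)

theorem xor_val_eq_of_psk_sub_eq
    (h : psk (2 ^ (l + 1)) a - psk (2 ^ (l + 1)) a' =
      psk (2 ^ (l + 1)) b - psk (2 ^ (l + 1)) b') :
    a.val ^^^ b.val = a'.val ^^^ b'.val := by
  have := xor_val_eq_of_psk_add_eq (a := a) (b := b + (2 ^ l : ℕ)) (a' := a')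
    (b' := b' + (2 ^ l : ℕ)) (by rw [psk_add_two_pow, psk_add_two_pow]; linear_combination h)
  rw [val_add_two_pow, val_add_two_pow, ← Nat.xor_assoc, ← Nat.xor_assoc] at this
  exact (xor_left_involutive _).injective this

end

theorem xor_removes_general (lam : ℕ) (hlam : 1 ≤ lam) (M : ℕ) (hM : M = 2 ^ lam)
    (n : ℕ) (ΔxA ΔxB : Fin n → ℂ)
    (hpm : ∀ i, ΔxA i = ΔxB i ∨ ΔxA i = -ΔxB i) :
    Removes ΔxA ΔxB
      (fun (a b : Fin n → ZMod M) => fun i => (((a i).val ^^^ (b i).val : ℕ) : ZMod M)) := by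
  obtain ⟨l, rfl⟩ := Nat.exists_eq_add_of_le' hlam
  subst hM
  rintro a a' b b' ⟨c, hA, hB⟩
  funext i
  suffices (a i).val ^^^ (b i).val = (a' i).val ^^^ (b' i).val from congrArg Nat.cast this
  rcases hpm i with h | h
  · exact xor_val_eq_of_psk_sub_eq (by rw [hA, hB, h])
  · exact xor_val_eq_of_psk_sub_eq_neg (by rw [hA, hB, h, mul_neg])

theorem xor_removes (lam : ℕ) (hlam : 1 ≤ lam) (M : ℕ) (hM : M = 2 ^ lam)
    (n : ℕ) (hn : 1 ≤ n) (ΔxA ΔxB : Fin n → ℂ)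
    (hA : ∀ i, ΔxA i ∈ diffSet M) (hB : ∀ i, ΔxB i ∈ diffSet M)
    (hpm : ∀ i, ΔxA i = ΔxB i ∨ ΔxA i = -ΔxB i) :
    Removes ΔxA ΔxB
      (fun (a b : Fin n → ZMod M) => fun i => (((a i).val ^^^ (b i).val : ℕ) : ZMod M)) :=
  xor_removes_general lam hlam M hM n ΔxA ΔxB hpm
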